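/- arXiv:2507.08840 — 2 statements merged into one kernel-verified Lean document; each statement's English description precedes it below -/
import Mathlib

section
/- If R₀ = βΦ/(ν(δ+ν)) < 1, 0 < γ < 1, and all parameters β, Φ, ν, δ, η, k, Ψ are positive, then every eigenvalue of the Jacobian of the SEIAR system at the mob-free equilibrium has negative real part; hence the mob-free equilibrium is locally asymptotically stable. -/
open Matrix Complex

private lemma seiar_det4 (B Z C W V D Q Q2 E : ℂ) :
    Matrix.det !![B,0,0,0; Z,C,0,0; W,V,D,0; (0:ℂ),Q,Q2,E] = B*(C*(D*E)) := by
  rw [Matrix.det_succ_row_zero]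
  simp [Fin.sum_univ_succ, Matrix.det_fin_three]
  left; ring

private lemma seiar_det5 (A X Y B Z C W V D Q Q2 E : ℂ) :
    Matrix.det !![A,X,0,0,Y; 0,B,0,0,0; 0,Z,C,0,0; 0,W,V,D,0; (0:ℂ),0,Q,Q2,E]
      = A*(B*(C*(D*E))) := by
  rw [Matrix.det_succ_column_zero]
  simp [Fin.sum_univ_succ]
  left
  have h : (!![A,X,0,0,Y; 0,B,0,0,0; 0,Z,C,0,0; 0,W,V,D,0; (0:ℂ),0,Q,Q2,E]).submatrix
      Fin.succ Fin.succ = !![B,0,0,0; Z,C,0,0; W,V,D,0; (0:ℂ),Q,Q2,E] := by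
    ext i j
    fin_cases i <;> fin_cases j <;> rfl
  rw [h, seiar_det4]

set_option maxRecDepth 10000 in
theorem seiar_mfe_locally_asymptotically_stable
    (β Φ ν δ α η γ k Ψ : ℝ)
    (hβ : 0 < β) (hΦ : 0 < Φ) (hν : 0 < ν) (hδ : 0 < δ)
    (hη : 0 < η) (hγ0 : 0 < γ) (hγ1 : γ < 1) (hk : 0 < k) (hΨ : 0 < Ψ)
    (hR0 : β * Φ / (ν * (δ + ν)) < 1)
    (J : Matrix (Fin 5) (Fin 5) ℝ)
    (hJ : J = !![-ν, -β * Φ / ν, 0, 0, Ψ;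
                 0, β * Φ / ν - δ - ν, 0, 0, 0;
                 0, α * δ, -η * γ - k - ν, 0, 0;
                 0, δ * (1 - α), k, -η * (1 - γ) - ν, 0;
                 0, 0, η * γ, η * (1 - γ), -Ψ - ν]) :
    ∀ μ ∈ spectrum ℂ (J.map (fun x : ℝ => (x : ℂ))), μ.re < 0 := by
  intro μ hμ
  rw [spectrum.mem_iff] at hμ
  have hdet : (algebraMap ℂ (Matrix (Fin 5) (Fin 5) ℂ) μ
      - J.map (fun x : ℝ => (x : ℂ))).det = 0 := by
    by_contra h
    exact hμ ((Matrix.isUnit_iff_isUnit_det _).mpr (isUnit_iff_ne_zero.mpr h))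
  have heq : algebraMap ℂ (Matrix (Fin 5) (Fin 5) ℂ) μ - J.map (fun x : ℝ => (x : ℂ))
      = !![μ - ((-ν : ℝ) : ℂ), ((-(-β * Φ / ν) : ℝ) : ℂ), 0, 0, ((-Ψ : ℝ) : ℂ);
           0, μ - ((β * Φ / ν - δ - ν : ℝ) : ℂ), 0, 0, 0;
           0, ((-(α * δ) : ℝ) : ℂ), μ - ((-η * γ - k - ν : ℝ) : ℂ), 0, 0;
           0, ((-(δ * (1 - α)) : ℝ) : ℂ), ((-k : ℝ) : ℂ), μ - ((-η * (1 - γ) - ν : ℝ) : ℂ), 0;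
           0, 0, ((-(η * γ) : ℝ) : ℂ), ((-(η * (1 - γ)) : ℝ) : ℂ), μ - ((-Ψ - ν : ℝ) : ℂ)] := by
    subst hJ
    ext i j
    fin_cases i <;> fin_cases j <;>
      simp [Matrix.algebraMap_matrix_apply, Matrix.map_apply, Matrix.vecHead, Matrix.vecTail] <;> push_cast <;> ring_nf
  rw [heq, seiar_det5] at hdet
  have key : ∀ c : ℝ, μ - ((c : ℝ) : ℂ) = 0 → c < 0 → μ.re < 0 := by
    intro c hc hneg
    have := congrArg Complex.re hc
    simp at this
    linarith
  have hβΦ : β * Φ / ν - δ - ν < 0 := by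
    have h1 : β * Φ < ν * (δ + ν) := by
      rw [div_lt_one (by positivity)] at hR0
      exact hR0
    have h2 : β * Φ / ν < δ + ν := (div_lt_iff₀ hν).mpr (by nlinarith)
    linarith
  rcases mul_eq_zero.mp hdet with h | h
  · exact key _ h (by linarith)
  rcases mul_eq_zero.mp h with h | h
  · exact key _ h hβΦ
  rcases mul_eq_zero.mp h with h | h
  · exact key _ h (by nlinarith)
  rcases mul_eq_zero.mp h with h | h
  · exact key _ h (by nlinarith)
  · exact key _ h (by linarith)
end

section
/- If R₀ < 1, then the only equilibrium of the SEIAR system in the nonnegative orthant with S ≤ Φ/ν is the mob-free equilibrium (Φ/ν, 0, 0, 0, 0); i.e., any nonnegative equilibrium with E > 0 requires S = (δ+ν)/β > Φ/ν, contradicting S ≤ Φ/ν. -/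
theorem seiar_unique_equilibrium_below_threshold
    (Φ Ψ β ν α δ k γ η : ℝ)
    (hΦ : 0 < Φ) (hΨ : 0 < Ψ) (hβ : 0 < β) (hν : 0 < ν) (hδ : 0 < δ)
    (hk : 0 < k) (hη : 0 < η) (hα0 : 0 < α) (hα1 : α < 1) (hγ0 : 0 < γ) (hγ1 : γ < 1)
    (hR0 : β * Φ / (ν * (δ + ν)) < 1)
    (S E I A R : ℝ)
    (hSnn : 0 ≤ S) (hEnn : 0 ≤ E) (hInn : 0 ≤ I) (hAnn : 0 ≤ A) (hRnn : 0 ≤ R)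
    (hSle : S ≤ Φ / ν)
    (eq1 : Φ + Ψ * R - β * S * E - ν * S = 0)
    (eq2 : β * S * E - α * δ * E - (1 - α) * δ * E - ν * E = 0)
    (eq3 : α * δ * E - k * I - γ * η * I - ν * I = 0)
    (eq4 : (1 - α) * δ * E + k * I - (1 - γ) * η * A - ν * A = 0)
    (eq5 : (1 - γ) * η * A + γ * η * I - Ψ * R - ν * R = 0) :
    S = Φ / ν ∧ E = 0 ∧ I = 0 ∧ A = 0 ∧ R = 0 := by
  have hE : E = 0 := by
    by_contra hE0
    have hEpos : 0 < E := lt_of_le_of_ne hEnn (Ne.symm hE0)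
    have hfac : E * (β * S - (δ + ν)) = 0 := by ring_nf; linarith [eq2]
    have hS : β * S = δ + ν := by
      rcases mul_eq_zero.1 hfac with h | h
      · exact absurd h hE0
      · linarith
    -- R0 < 1 gives β * Φ < ν * (δ + ν)
    have hνδν : 0 < ν * (δ + ν) := by positivity
    have hlt : β * Φ < ν * (δ + ν) := (div_lt_one hνδν).1 hR0
    -- S ≤ Φ / ν gives ν * S ≤ Φ, so β * ν * S ≤ β * Φ < ν * (δ+ν) = ν * β * S
    have hSΦ : ν * S ≤ Φ := by
      have := (le_div_iff₀ hν).1 hSle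
      linarith
    nlinarith [mul_le_mul_of_nonneg_left hSΦ hβ.le]
  subst hE
  have hI : I = 0 := by nlinarith [mul_nonneg (mul_nonneg hγ0.le hη.le) hInn, mul_nonneg hk.le hInn, mul_nonneg hν.le hInn]
  subst hI
  have hA : A = 0 := by nlinarith [mul_nonneg (mul_nonneg (sub_nonneg.2 hγ1.le) hη.le) hAnn, mul_nonneg hν.le hAnn]
  subst hA
  have hR : R = 0 := by nlinarith [mul_nonneg hΨ.le hRnn, mul_nonneg hν.le hRnn]
  subst hR
  constructor
  · field_simp at eq1 ⊢; linarith
  · simp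
end
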